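/- Let G = S∞ × S∞ × S∞ be the product of three copies of the finitary symmetric group of ℕ and let ρ be a unitary representation of G on a complex Hilbert space H. For δ ∈ ℕ let H[δ] be the closed subspace of vectors fixed by ρ(k) for all k ∈ K[δ] and P[δ] the orthogonal projection of H onto H[δ]. Then for all p, q ∈ G and all α, β, γ ∈ ℕ there exists N such that for every j ≥ N: P[α] ∘ ρ(p) ∘ P[β] ∘ ρ(q) ∘ P[γ] = P[α] ∘ ρ(p·Θ_j[β]·q) ∘ P[γ]. (Multiplicativity theorem: the assignment of the operator P[α]∘ρ(p)∘P[β] to a double coset is compatible with the product of double cosets.) -/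

import Mathlib

open scoped InnerProductSpace

/-- The finitary symmetric group of a countable set: permutations with finite support. -/
def finitarySymm (Ω : Type*) : Subgroup (Equiv.Perm Ω) where
  carrier := {g | {x | g x ≠ x}.Finite}
  one_mem' := by simp
  mul_mem' := by
    intro a b ha hb
    refine Set.Finite.subset (ha.union hb) fun x hx => ?_
    simp only [Set.mem_setOf_eq, Equiv.Perm.mul_apply] at hx
    simp only [Set.mem_union, Set.mem_setOf_eq]
    by_cases h : b x = x
    · exact Or.inl (by simpa [h] using hx)
    · exact Or.inr h
  inv_mem' := by
    intro a ha
    refine Set.Finite.subset ha fun x hx => ?_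
    simp only [Set.mem_setOf_eq] at hx ⊢
    intro h
    apply hx
    nth_rewrite 1 [← h]
    simp

/-- `S∞`, the finitary symmetric group of `ℕ`. -/
abbrev SInf := ↥(finitarySymm ℕ)

/-- The group `G = S∞ × S∞ × S∞`. -/
abbrev TriG := SInf × SInf × SInf

/-- Membership in the subgroup `K[α] ⊆ G`: diagonal triples `(r, r, r)` with `r ∈ S∞`
fixing every `x < α`. -/
def InKtri (α : ℕ) (k : TriG) : Prop :=
  ∃ r : SInf, (∀ x < α, (r : Equiv.Perm ℕ) x = x) ∧ k = (r, r, r)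

/-- The permutation exchanging the blocks `[β, β+j)` and `[β+j, β+2j)`. -/
def thetaFun (β j : ℕ) (x : ℕ) : ℕ :=
  if β ≤ x ∧ x < β + j then x + j
  else if β + j ≤ x ∧ x < β + 2 * j then x - j
  else x

lemma thetaFun_involutive (β j : ℕ) : Function.Involutive (thetaFun β j) := by
  intro x
  unfold thetaFun
  split_ifs <;> omega

/-- `θ_j[β]` as a permutation of `ℕ`. -/
def thetaPerm (β j : ℕ) : Equiv.Perm ℕ :=
  Function.Involutive.toPerm _ (thetaFun_involutive β j)

lemma thetaPerm_finitary (β j : ℕ) : thetaPerm β j ∈ finitarySymm ℕ := by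
  refine Set.Finite.subset (Set.finite_Iio (β + 2 * j)) fun x hx => ?_
  simp only [Set.mem_setOf_eq, thetaPerm, Function.Involutive.coe_toPerm, thetaFun] at hx
  simp only [Set.mem_Iio]
  by_contra h
  apply hx
  split_ifs <;> omega

/-- `θ_j[β]` as an element of `S∞`. -/
def thetaEl (β j : ℕ) : SInf := ⟨thetaPerm β j, thetaPerm_finitary β j⟩

/-- `Θ_j[β] = (θ_j[β], θ_j[β], θ_j[β])` as an element of `G = S∞ × S∞ × S∞`. -/
def ThetaTri (β j : ℕ) : TriG := (thetaEl β j, thetaEl β j, thetaEl β j)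

/-- Two elements of `G` lie in the same `(K[α], K[γ])`-double coset. -/
def SameDC (α γ : ℕ) (u v : TriG) : Prop :=
  ∃ k₁ k₂ : TriG, InKtri α k₁ ∧ InKtri γ k₂ ∧ u = k₁ * v * k₂

/-- The subspace `H[δ]` of vectors fixed by all operators `ρ(k)`, `k ∈ K[δ]`. -/
def fixedSet {H : Type*} [NormedAddCommGroup H] [InnerProductSpace ℂ H] [CompleteSpace H]
    (ρ : TriG →* unitary (H →L[ℂ] H)) (δ : ℕ) : Set H :=
  {v | ∀ k : TriG, InKtri δ k → (ρ k : H →L[ℂ] H) v = v}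

/-- `P` is the orthogonal projection of `H` onto `H[δ]`: it takes values in `H[δ]` and
`v - P v` is orthogonal to `H[δ]`. -/
def IsProjOntoFixed {H : Type*} [NormedAddCommGroup H] [InnerProductSpace ℂ H]
    [CompleteSpace H] (ρ : TriG →* unitary (H →L[ℂ] H)) (δ : ℕ) (P : H →L[ℂ] H) : Prop :=
  ∀ v : H, P v ∈ fixedSet ρ δ ∧ ∀ w ∈ fixedSet ρ δ, ⟪v - P v, w⟫_ℂ = 0

/-!
Moving `P[α]` and `ρ(p)` across the inner product reduces the identity to
`⟪ρ(Θ_j[β]) ξ, η⟫ = ⟪P[β] ξ, η⟫` for `ξ = ρ(q) P[γ] v` and `η = ρ(p)⁻¹ P[α] w`; once `L` exceeds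
`α, β, γ` and the supports of `p, q`, both vectors are fixed by `K[L]`. For such vectors the
matrix coefficient of `Θ_j[β]` does not depend on `j ≥ L - β`, since all these `Θ_j[β]` lie in
one `(K[L], K[L])`-double coset. Splitting `ξ = P[β] ξ + ζ`, it remains to show that
`ρ(Θ_j[β]) ζ ⊥ η` when `ζ ⊥ H[β]`. Along a fast-growing sequence `j_m` the vectors
`V_m = ρ(Θ_{j_m}[β]) ζ` have a Gram matrix that is constant off the diagonal, so their Cesàro
means converge. The limit is `K[β]`-invariant (each element of `K[β]` fixes `V_m` for large `m`)
and orthogonal to every `V_m`, hence to itself, so it is `0`; but its inner product with `η`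
is the constant `⟪ρ(Θ_j[β]) ζ, η⟫`.
-/

open Filter Finset Topology

lemma cauchySeq_of_dist_sq_le {α : Type*} [PseudoMetricSpace α] {x : ℕ → α} {f : ℕ → ℝ}
    (hf : CauchySeq f) (h : ∀ n m, dist (x n) (x m) ^ 2 ≤ dist (f n) (f m)) : CauchySeq x := by
  rw [Metric.cauchySeq_iff] at hf ⊢
  intro ε hε
  obtain ⟨N, hN⟩ := hf (ε ^ 2) (by positivity)
  exact ⟨N, fun m hm n hn => lt_of_pow_lt_pow_left₀ 2 hε.le ((h m n).trans_lt (hN m hm n hn))⟩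

noncomputable def cesaroMean (𝕜 : Type*) {E : Type*} [DivisionRing 𝕜] [AddCommGroup E]
    [Module 𝕜 E] (V : ℕ → E) (n : ℕ) : E :=
  ((n : 𝕜) + 1)⁻¹ • ∑ m ∈ range (n + 1), V m

section Cesaro

variable {𝕜 E : Type*} [RCLike 𝕜]

section Normed

variable [NormedAddCommGroup E] [NormedSpace 𝕜 E] {V : ℕ → E}

lemma apply_eq_of_tendsto_cesaroMean (U : E →L[𝕜] E) (hV : ∀ᶠ m in atTop, U (V m) = V m)
    {w : E} (hw : Tendsto (cesaroMean 𝕜 V) atTop (𝓝 w)) : U w = w := by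
  obtain ⟨S, hS⟩ := eventually_atTop.1 hV
  set D := ∑ m ∈ range S, (U (V m) - V m)
  have hdefect : ∀ n ≥ S, (1 / ((n : 𝕜) + 1)) • D = U (cesaroMean 𝕜 V n) - cesaroMean 𝕜 V n := by
    intro n hn
    have hsupp : ∀ m ∈ range (n + 1), m ∉ range S → U (V m) - V m = 0 := fun m _ hm => by
      rw [hS m (by simpa using hm), sub_self]
    rw [cesaroMean, map_smul, map_sum, ← smul_sub, ← sum_sub_distrib, one_div,
      ← sum_subset (range_subset_range.2 (by omega)) hsupp]
  have hlim : Tendsto (fun n => U (cesaroMean 𝕜 V n) - cesaroMean 𝕜 V n) atTop (𝓝 0) := by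
    have h0 := (tendsto_one_div_add_atTop_nhds_zero_nat (𝕜 := 𝕜)).smul_const D
    rw [zero_smul] at h0
    exact h0.congr' (eventually_atTop.2 ⟨S, hdefect⟩)
  exact sub_eq_zero.1 (tendsto_nhds_unique (((U.continuous.tendsto w).comp hw).sub hw) hlim)

end Normed

variable [NormedAddCommGroup E] [InnerProductSpace 𝕜 E] {V : ℕ → E}

lemma inner_cesaroMean_left {y : E} {t : 𝕜} (h : ∀ m, ⟪V m, y⟫_𝕜 = t) (n : ℕ) :
    ⟪cesaroMean 𝕜 V n, y⟫_𝕜 = t := by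
  have hn : (n : 𝕜) + 1 ≠ 0 := Nat.cast_add_one_ne_zero n
  rw [cesaroMean, inner_smul_left, sum_inner, sum_congr rfl fun m _ => h m, sum_const,
    card_range, nsmul_eq_mul, map_inv₀, map_add, map_natCast, map_one]
  push_cast
  field_simp

lemma inner_eq_of_tendsto_cesaroMean {w : E} (hw : Tendsto (cesaroMean 𝕜 V) atTop (𝓝 w))
    {y : E} {t : 𝕜} (h : ∀ m, ⟪V m, y⟫_𝕜 = t) : ⟪w, y⟫_𝕜 = t :=
  tendsto_nhds_unique (hw.inner tendsto_const_nhds) (by simp [inner_cesaroMean_left h])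

variable {c σ : ℝ}

lemma re_inner_sum_range (hV : ∀ m m', RCLike.re ⟪V m, V m'⟫_𝕜 = if m = m' then c else σ)
    (a b : ℕ) :
    RCLike.re ⟪∑ m ∈ range a, V m, ∑ m ∈ range b, V m⟫_𝕜 = min a b * (c - σ) + a * b * σ := by
  have hsplit : ∀ m m' : ℕ, (if m = m' then c else σ) = σ + if m = m' then c - σ else 0 := by
    intro m m'; split_ifs <;> ring
  simp only [sum_inner, inner_sum, map_sum, hV, hsplit, sum_add_distrib, sum_ite_eq', sum_ite_mem,
    range_inter_range, sum_const, card_range, nsmul_eq_mul]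
  push_cast
  rw [min_comm (b : ℝ)]
  ring

lemma re_inner_cesaroMean (hV : ∀ m m', RCLike.re ⟪V m, V m'⟫_𝕜 = if m = m' then c else σ)
    (n n' : ℕ) :
    RCLike.re ⟪cesaroMean 𝕜 V n, cesaroMean 𝕜 V n'⟫_𝕜 = σ + (c - σ) / ((max n n' : ℕ) + 1) := by
  have hcast : ∀ k : ℕ, ((k : 𝕜) + 1)⁻¹ = ((((k : ℝ) + 1)⁻¹ : ℝ) : 𝕜) := fun k => by push_cast; rfl
  rw [cesaroMean, cesaroMean, hcast, hcast, inner_smul_left, inner_smul_right, RCLike.conj_ofReal,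
    RCLike.re_ofReal_mul, RCLike.re_ofReal_mul, re_inner_sum_range hV]
  rcases le_total n n' with h | h <;>
    simp only [h, min_eq_left, min_eq_right, max_eq_left, max_eq_right, add_le_add_iff_right] <;>
    (push_cast; field_simp; ring)

lemma cauchySeq_cesaroMean (hV : ∀ m m', RCLike.re ⟪V m, V m'⟫_𝕜 = if m = m' then c else σ) :
    CauchySeq (cesaroMean 𝕜 V) := by
  have hnorm : ∀ m, ‖V m‖ ^ 2 = c := fun m => by rw [@norm_sq_eq_re_inner 𝕜, hV, if_pos rfl]
  have hσc : σ ≤ c := by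
    have := norm_sub_sq (𝕜 := 𝕜) (V 0) (V 1)
    rw [hnorm, hnorm, hV, if_neg zero_ne_one] at this
    linarith [sq_nonneg ‖V 0 - V 1‖]
  set f : ℕ → ℝ := fun n => (c - σ) * (1 / ((n : ℝ) + 1))
  have hf : CauchySeq f := (tendsto_one_div_add_atTop_nhds_zero_nat.const_mul (c - σ)).cauchySeq
  refine cauchySeq_of_dist_sq_le hf fun n n' => le_of_eq ?_
  wlog h : n ≤ n' generalizing n n'
  · rw [dist_comm, dist_comm (f n)]
    exact this n' n (by omega)
  rw [dist_eq_norm, Real.dist_eq, norm_sub_sq (𝕜 := 𝕜), @norm_sq_eq_re_inner 𝕜,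
    @norm_sq_eq_re_inner 𝕜, re_inner_cesaroMean hV, re_inner_cesaroMean hV, re_inner_cesaroMean hV,
    max_self, max_self, max_eq_right h, abs_of_nonneg]
  · ring
  · have : (n : ℝ) ≤ n' := by exact_mod_cast h
    refine sub_nonneg.2 (mul_le_mul_of_nonneg_left ?_ (sub_nonneg.2 hσc))
    gcongr

end Cesaro

lemma thetaPerm_mul_self (β j : ℕ) : thetaPerm β j * thetaPerm β j = 1 :=
  Equiv.ext (thetaFun_involutive β j)

lemma thetaEl_mul_self (β j : ℕ) : thetaEl β j * thetaEl β j = 1 :=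
  Subtype.ext (thetaPerm_mul_self β j)

lemma ThetaTri_inv (β j : ℕ) : (ThetaTri β j)⁻¹ = ThetaTri β j := by
  refine inv_eq_of_mul_eq_one_right ?_
  simp only [ThetaTri, Prod.mk_mul_mk, thetaEl_mul_self, Prod.mk_one_one]

section Theta

variable {β j : ℕ}

lemma thetaPerm_apply_of_lt {x : ℕ} (hx : x < β) : thetaPerm β j x = x := by
  simp only [thetaPerm, Function.Involutive.coe_toPerm, thetaFun]
  split_ifs <;> omega

lemma thetaPerm_apply_of_le {x : ℕ} (hx : β + 2 * j ≤ x) : thetaPerm β j x = x := by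
  simp only [thetaPerm, Function.Involutive.coe_toPerm, thetaFun]
  split_ifs <;> omega

lemma thetaPerm_apply_of_mem_Ico {x : ℕ} (hx : x ∈ Set.Ico β (β + j)) :
    thetaPerm β j x = x + j := by
  simp only [thetaPerm, Function.Involutive.coe_toPerm, thetaFun, Set.mem_Ico] at hx ⊢
  split_ifs <;> omega

lemma thetaPerm_apply_add_of_mem_Ico {x : ℕ} (hx : x ∈ Set.Ico β (β + j)) :
    thetaPerm β j (x + j) = x := by
  simp only [thetaPerm, Function.Involutive.coe_toPerm, thetaFun, Set.mem_Ico] at hx ⊢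
  split_ifs <;> omega

lemma thetaPerm_conj_apply_of_lt {r : Equiv.Perm ℕ} (hr₁ : ∀ x < β, r x = x)
    (hr₂ : ∀ x, β + j ≤ x → r x = x) {x : ℕ} (hx : x < β + j) :
    thetaPerm β j (r (thetaPerm β j x)) = x := by
  rcases lt_or_ge x β with hxβ | hxβ
  · rw [thetaPerm_apply_of_lt hxβ, hr₁ x hxβ, thetaPerm_apply_of_lt hxβ]
  · rw [thetaPerm_apply_of_mem_Ico ⟨hxβ, hx⟩, hr₂ _ (by omega),
      thetaPerm_apply_add_of_mem_Ico ⟨hxβ, hx⟩]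

lemma thetaPerm_add_apply_of_lt {d : ℕ} (hjd : j ≤ d) {x : ℕ} (hx : x < β + j) :
    thetaPerm β (j + d) (thetaPerm (β + j) d (thetaPerm β j x)) = x := by
  simp only [thetaPerm, Function.Involutive.coe_toPerm, thetaFun]
  split_ifs <;> omega

lemma InKtri.inv {δ : ℕ} {k : TriG} (hk : InKtri δ k) : InKtri δ k⁻¹ := by
  obtain ⟨r, hr, rfl⟩ := hk
  exact ⟨r⁻¹, fun x hx => (Equiv.Perm.inv_eq_iff_eq).2 (hr x hx).symm, rfl⟩

lemma InKtri.mono {δ δ' : ℕ} {k : TriG} (h : δ' ≤ δ) (hk : InKtri δ k) : InKtri δ' k := by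
  obtain ⟨r, hr, rfl⟩ := hk
  exact ⟨r, fun x hx => hr x (hx.trans_le h), rfl⟩

lemma inKtri_ThetaTri {δ : ℕ} (h : δ ≤ β) : InKtri δ (ThetaTri β j) :=
  ⟨thetaEl β j, fun _ hx => thetaPerm_apply_of_lt (hx.trans_le h), rfl⟩

lemma sameDC_ThetaTri_add {d : ℕ} (hjd : j ≤ d) :
    SameDC (β + j) (β + j) (ThetaTri β (j + d)) (ThetaTri β j) := by
  set k : SInf := thetaEl (β + j) d
  set h : SInf := thetaEl β (j + d) * k * thetaEl β j
  refine ⟨(h, h, h), (k, k, k), ⟨h, fun x hx => thetaPerm_add_apply_of_lt hjd hx, rfl⟩,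
    ⟨k, fun x hx => thetaPerm_apply_of_lt hx, rfl⟩, ?_⟩
  have hθ : h * thetaEl β j * k = thetaEl β (j + d) :=
    by simp only [h, k, mul_assoc, thetaEl_mul_self, mul_one]
  simp only [ThetaTri, Prod.mk_mul_mk, hθ]

end Theta

lemma SInf.eventually_apply_eq (u : SInf) :
    ∀ᶠ S in atTop, ∀ x, S ≤ x → (u : Equiv.Perm ℕ) x = x := by
  obtain ⟨S, hS⟩ := (u.prop : {x | (u : Equiv.Perm ℕ) x ≠ x}.Finite).bddAbove
  refine eventually_atTop.2 ⟨S + 1, fun T hT x hx => ?_⟩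
  by_contra h
  have := hS h
  omega

lemma commute_of_forall_lt_of_forall_ge {L : ℕ} {r u : SInf}
    (hr : ∀ x < L, (r : Equiv.Perm ℕ) x = x) (hu : ∀ x, L ≤ x → (u : Equiv.Perm ℕ) x = x) :
    r * u = u * r := by
  refine Subtype.ext (Equiv.Perm.Disjoint.commute fun x => ?_).eq
  rcases lt_or_ge x L with hx | hx
  · exact Or.inl (hr x hx)
  · exact Or.inr (hu x hx)

section UnitaryRep

variable {𝕜 G H : Type*} [RCLike 𝕜] [Group G] [NormedAddCommGroup H] [InnerProductSpace 𝕜 H]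
  [CompleteSpace H] (ρ : G →* unitary (H →L[𝕜] H))

lemma unitaryRep_mul_apply (a b : G) (x : H) :
    (ρ (a * b) : H →L[𝕜] H) x = (ρ a : H →L[𝕜] H) ((ρ b : H →L[𝕜] H) x) := by
  rw [map_mul]
  rfl

lemma unitaryRep_inner_apply_left (g : G) (x y : H) :
    ⟪(ρ g : H →L[𝕜] H) x, y⟫_𝕜 = ⟪x, (ρ g⁻¹ : H →L[𝕜] H) y⟫_𝕜 := by
  rw [← Unitary.inner_map_map (ρ g⁻¹), ← unitaryRep_mul_apply, inv_mul_cancel, map_one]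
  rfl

lemma unitaryRep_inner_apply_right (g : G) (x y : H) :
    ⟪x, (ρ g : H →L[𝕜] H) y⟫_𝕜 = ⟪(ρ g⁻¹ : H →L[𝕜] H) x, y⟫_𝕜 := by
  rw [unitaryRep_inner_apply_left, inv_inv]

end UnitaryRep

section FixedVectors

variable {H : Type*} [NormedAddCommGroup H] [InnerProductSpace ℂ H] [CompleteSpace H]
  {ρ : TriG →* unitary (H →L[ℂ] H)}

lemma fixedSet_mono {δ δ' : ℕ} (h : δ ≤ δ') : fixedSet ρ δ ⊆ fixedSet ρ δ' :=
  fun _ hv k hk => hv k (hk.mono h)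

lemma sub_mem_fixedSet {δ : ℕ} {x y : H} (hx : x ∈ fixedSet ρ δ) (hy : y ∈ fixedSet ρ δ) :
    x - y ∈ fixedSet ρ δ :=
  fun k hk => by rw [map_sub, hx k hk, hy k hk]

lemma IsProjOntoFixed.inner_apply_comm {δ : ℕ} {P : H →L[ℂ] H} (hP : IsProjOntoFixed ρ δ P)
    (x y : H) : ⟪P x, y⟫_ℂ = ⟪x, P y⟫_ℂ := by
  have hx : ⟪x - P x, P y⟫_ℂ = 0 := (hP x).2 _ (hP y).1
  have hy : ⟪P x, y - P y⟫_ℂ = 0 := by rw [← inner_conj_symm, (hP y).2 _ (hP x).1, map_zero]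
  rw [inner_sub_left] at hx
  rw [inner_sub_right] at hy
  linear_combination hy - hx

lemma eventually_mapsTo_fixedSet (ρ : TriG →* unitary (H →L[ℂ] H)) (g : TriG) :
    ∀ᶠ L in atTop, Set.MapsTo (ρ g : H →L[ℂ] H) (fixedSet ρ L) (fixedSet ρ L) := by
  filter_upwards [g.1.eventually_apply_eq, g.2.1.eventually_apply_eq,
    g.2.2.eventually_apply_eq] with L h₁ h₂ h₃ ξ hξ k hk
  obtain ⟨r, hr, rfl⟩ := hk
  have hcomm : ((r, r, r) : TriG) * g = g * (r, r, r) := by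
    simp only [Prod.mul_def, commute_of_forall_lt_of_forall_ge hr h₁,
      commute_of_forall_lt_of_forall_ge hr h₂, commute_of_forall_lt_of_forall_ge hr h₃]
  rw [← unitaryRep_mul_apply, hcomm, unitaryRep_mul_apply, hξ _ ⟨r, hr, rfl⟩]

lemma inner_apply_eq_of_sameDC {L : ℕ} {u v : TriG} (huv : SameDC L L u v) {ξ η : H}
    (hξ : ξ ∈ fixedSet ρ L) (hη : η ∈ fixedSet ρ L) :
    ⟪(ρ u : H →L[ℂ] H) ξ, η⟫_ℂ = ⟪(ρ v : H →L[ℂ] H) ξ, η⟫_ℂ := by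
  obtain ⟨k₁, k₂, hk₁, hk₂, rfl⟩ := huv
  rw [unitaryRep_mul_apply, unitaryRep_mul_apply, hξ k₂ hk₂, unitaryRep_inner_apply_left,
    hη _ hk₁.inv]

lemma inner_ThetaTri_apply_eq {L β j₁ j₂ : ℕ} (h₁ : L ≤ β + j₁) (h₂ : L ≤ β + j₂) {ξ η : H}
    (hξ : ξ ∈ fixedSet ρ L) (hη : η ∈ fixedSet ρ L) :
    ⟪(ρ (ThetaTri β j₁) : H →L[ℂ] H) ξ, η⟫_ℂ = ⟪(ρ (ThetaTri β j₂) : H →L[ℂ] H) ξ, η⟫_ℂ := by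
  have hstep : ∀ j d, L ≤ β + j → j ≤ d → ⟪(ρ (ThetaTri β (j + d)) : H →L[ℂ] H) ξ, η⟫_ℂ =
      ⟪(ρ (ThetaTri β j) : H →L[ℂ] H) ξ, η⟫_ℂ := fun j d hj hjd =>
    inner_apply_eq_of_sameDC (sameDC_ThetaTri_add hjd) (fixedSet_mono hj hξ)
      (fixedSet_mono hj hη)
  calc _ = ⟪(ρ (ThetaTri β (j₁ + (j₁ + 2 * j₂))) : H →L[ℂ] H) ξ, η⟫_ℂ :=
        (hstep _ _ h₁ (by omega)).symm
    _ = ⟪(ρ (ThetaTri β (j₂ + (2 * j₁ + j₂))) : H →L[ℂ] H) ξ, η⟫_ℂ := by ring_nf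
    _ = _ := hstep _ _ h₂ (by omega)

lemma diag_apply_ThetaTri_apply {β j : ℕ} {ξ : H} (hξ : ξ ∈ fixedSet ρ (β + j)) {r : SInf}
    (hr₁ : ∀ x < β, (r : Equiv.Perm ℕ) x = x) (hr₂ : ∀ x, β + j ≤ x → (r : Equiv.Perm ℕ) x = x) :
    (ρ (r, r, r) : H →L[ℂ] H) ((ρ (ThetaTri β j) : H →L[ℂ] H) ξ) =
      (ρ (ThetaTri β j) : H →L[ℂ] H) ξ := by
  set r' : SInf := thetaEl β j * r * thetaEl β j
  have hcomm : ((r, r, r) : TriG) * ThetaTri β j = ThetaTri β j * (r', r', r') := by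
    have : r * thetaEl β j = thetaEl β j * r' := by
      simp only [r', ← mul_assoc, thetaEl_mul_self, one_mul]
    simp only [ThetaTri, Prod.mk_mul_mk, this]
  have hr' : InKtri (β + j) (r', r', r') :=
    ⟨r', fun x hx => thetaPerm_conj_apply_of_lt hr₁ hr₂ hx, rfl⟩
  rw [← unitaryRep_mul_apply, hcomm, unitaryRep_mul_apply, hξ _ hr']

lemma inner_ThetaTri_apply_ThetaTri_apply {β j j' : ℕ} (h : 2 * j' ≤ j) {ζ : H}
    (hζ : ζ ∈ fixedSet ρ (β + j)) :
    ⟪(ρ (ThetaTri β j) : H →L[ℂ] H) ζ, (ρ (ThetaTri β j') : H →L[ℂ] H) ζ⟫_ℂ =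
      ⟪(ρ (ThetaTri β j) : H →L[ℂ] H) ζ, ζ⟫_ℂ := by
  have hfix : (ρ (ThetaTri β j') : H →L[ℂ] H) ((ρ (ThetaTri β j) : H →L[ℂ] H) ζ) =
      (ρ (ThetaTri β j) : H →L[ℂ] H) ζ :=
    diag_apply_ThetaTri_apply hζ (fun _ hx => thetaPerm_apply_of_lt hx)
      (fun _ hx => thetaPerm_apply_of_le (by omega))
  rw [unitaryRep_inner_apply_right, ThetaTri_inv, hfix]

end FixedVectors

section Multiplicativity

variable {H : Type*} [NormedAddCommGroup H] [InnerProductSpace ℂ H] [CompleteSpace H]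
  {ρ : TriG →* unitary (H →L[ℂ] H)}

lemma inner_ThetaTri_apply_eq_zero {L β j : ℕ} (hj : L ≤ β + j) {ζ η : H}
    (hζ : ζ ∈ fixedSet ρ L) (hζβ : ∀ u ∈ fixedSet ρ β, ⟪ζ, u⟫_ℂ = 0)
    (hη : η ∈ fixedSet ρ L) : ⟪(ρ (ThetaTri β j) : H →L[ℂ] H) ζ, η⟫_ℂ = 0 := by
  -- `j_m = 2 ^ (L + m)` grows fast enough that `Θ_{j_m'}[β]` fixes `V m` for `m' < m`.
  set jj : ℕ → ℕ := fun m => 2 ^ (L + m)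
  have hjj : ∀ m, L + m < jj m := fun m => Nat.lt_two_pow_self
  have hjj_two_mul : ∀ {m' m}, m' < m → 2 * jj m' ≤ jj m := fun h => by
    rw [← pow_succ']
    exact Nat.pow_le_pow_right two_pos (by omega)
  have hLjj : ∀ m, L ≤ β + jj m := fun m => by have := hjj m; omega
  set V : ℕ → H := fun m => (ρ (ThetaTri β (jj m)) : H →L[ℂ] H) ζ
  have hVζ : ∀ m, ⟪V m, ζ⟫_ℂ = ⟪V 0, ζ⟫_ℂ := fun m =>
    inner_ThetaTri_apply_eq (hLjj m) (hLjj 0) hζ hζ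
  have hoff : ∀ {m' m}, m' < m → ⟪V m, V m'⟫_ℂ = ⟪V 0, ζ⟫_ℂ := fun {m' m} h => by
    rw [← hVζ m]
    exact inner_ThetaTri_apply_ThetaTri_apply (hjj_two_mul h) (fixedSet_mono (hLjj m) hζ)
  have hgram : ∀ m m', RCLike.re ⟪V m, V m'⟫_ℂ =
      if m = m' then ‖ζ‖ ^ 2 else RCLike.re ⟪V 0, ζ⟫_ℂ := by
    intro m m'
    rcases lt_trichotomy m m' with h | rfl | h
    · rw [if_neg h.ne, ← inner_conj_symm, RCLike.conj_re, hoff h]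
    · rw [if_pos rfl, Unitary.inner_map_map, inner_self_eq_norm_sq]
    · rw [if_neg h.ne', hoff h]
  obtain ⟨w, hw⟩ := cauchySeq_tendsto_of_complete (cauchySeq_cesaroMean hgram)
  have hwβ : w ∈ fixedSet ρ β := by
    rintro _ ⟨r, hr, rfl⟩
    obtain ⟨S, hS⟩ := r.eventually_apply_eq.exists
    refine apply_eq_of_tendsto_cesaroMean _ (eventually_atTop.2 ⟨S, fun m hm => ?_⟩) hw
    exact diag_apply_ThetaTri_apply (fixedSet_mono (hLjj m) hζ) hr
      (fun x hx => hS x (by have := hjj m; omega))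
  have hw0 : w = 0 := by
    refine inner_self_eq_zero.1 (inner_eq_of_tendsto_cesaroMean hw fun m => ?_)
    rw [unitaryRep_inner_apply_left, ThetaTri_inv, hwβ _ (inKtri_ThetaTri le_rfl), hζβ w hwβ]
  rw [← inner_eq_of_tendsto_cesaroMean hw fun m => inner_ThetaTri_apply_eq (hLjj m) hj hζ hη,
    hw0, inner_zero_left]

lemma inner_ThetaTri_apply_eq_inner_proj {L β j : ℕ} (hβL : β ≤ L) (hj : L ≤ β + j)
    {P : H →L[ℂ] H} (hP : IsProjOntoFixed ρ β P) {ξ η : H} (hξ : ξ ∈ fixedSet ρ L)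
    (hη : η ∈ fixedSet ρ L) : ⟪(ρ (ThetaTri β j) : H →L[ℂ] H) ξ, η⟫_ℂ = ⟪P ξ, η⟫_ℂ := by
  have hPξ : (ρ (ThetaTri β j) : H →L[ℂ] H) (P ξ) = P ξ := (hP ξ).1 _ (inKtri_ThetaTri le_rfl)
  have hζ : ξ - P ξ ∈ fixedSet ρ L := sub_mem_fixedSet hξ (fixedSet_mono hβL (hP ξ).1)
  have hsplit : (ρ (ThetaTri β j) : H →L[ℂ] H) ξ =
      (ρ (ThetaTri β j) : H →L[ℂ] H) (ξ - P ξ) + P ξ := by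
    rw [map_sub, hPξ, sub_add_cancel]
  rw [hsplit, inner_add_left, inner_ThetaTri_apply_eq_zero hj hζ (hP ξ).2 hη, zero_add]

end Multiplicativity

/-- **Multiplicativity theorem (Theorem 3.4)**: for any unitary representation `ρ` of
`G = S∞ × S∞ × S∞` the compressions `P[α] ∘ ρ(·) ∘ P[β]` are multiplicative along the
product of double cosets: `P[α]∘ρ(p)∘P[β]∘ρ(q)∘P[γ] = P[α]∘ρ(p·Θ_j[β]·q)∘P[γ]` for all
sufficiently large `j`. -/
theorem tri_multiplicativity {H : Type*} [NormedAddCommGroup H] [InnerProductSpace ℂ H]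
    [CompleteSpace H] (ρ : TriG →* unitary (H →L[ℂ] H))
    (α β γ : ℕ) (Pα Pβ Pγ : H →L[ℂ] H)
    (hPα : IsProjOntoFixed ρ α Pα) (hPβ : IsProjOntoFixed ρ β Pβ)
    (hPγ : IsProjOntoFixed ρ γ Pγ) (p q : TriG) :
    ∃ N : ℕ, ∀ j ≥ N,
      Pα ∘L (ρ p : H →L[ℂ] H) ∘L Pβ ∘L (ρ q : H →L[ℂ] H) ∘L Pγ =
        Pα ∘L (ρ (p * ThetaTri β j * q) : H →L[ℂ] H) ∘L Pγ := by
  obtain ⟨L, hL, hq, hp⟩ := ((eventually_ge_atTop (α + β + γ)).and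
    ((eventually_mapsTo_fixedSet ρ q).and (eventually_mapsTo_fixedSet ρ p⁻¹))).exists
  refine ⟨L, fun j hj => ContinuousLinearMap.ext fun v => ext_inner_right ℂ fun w => ?_⟩
  have hξ := hq (fixedSet_mono (by omega) (hPγ v).1)
  have hη := hp (fixedSet_mono (by omega) (hPα w).1)
  simp only [ContinuousLinearMap.comp_apply]
  rw [hPα.inner_apply_comm, hPα.inner_apply_comm, unitaryRep_inner_apply_left, unitaryRep_mul_apply,
    unitaryRep_mul_apply, unitaryRep_inner_apply_left,
    inner_ThetaTri_apply_eq_inner_proj (by omega) (by omega) hPβ hξ hη]
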